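/- arXiv:1710.03749 — 9 statements merged into one kernel-verified Lean document; each statement's English description precedes it below -/
import Mathlib

section
/- Let (g,·) be a pre-Lie algebra and N : g → g a linear map. Set x ·_N y = N(x)·y + x·N(y) − N(x·y) and define the Nijenhuis torsion T : g × g → g by T(x,y) = N(x ·_N y) − N(x)·N(y). Then ·_N is a pre-Lie algebra structure on g if and only if T is closed for the coboundary operator of the regular representation, i.e. for all x,y,z ∈ g: x·T(y,z) − y·T(x,z) + T(y,x)·z − T(x,y)·z − T(y, x·z) + T(x, y·z) − T(x·y − y·x, z) = 0. -/
variable {K : Type*} [Field K] [CharZero K]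
variable {g : Type*} [AddCommGroup g] [Module K g]

/-- The pre-Lie identity for a bilinear multiplication. -/
def IsPreLie (mul : g →ₗ[K] g →ₗ[K] g) : Prop :=
  ∀ x y z : g, mul (mul x y) z - mul x (mul y z) = mul (mul y x) z - mul y (mul x z)

/-- The pre-Lie identity for a plain binary operation. -/
def IsPreLieFn (m : g → g → g) : Prop :=
  ∀ x y z : g, m (m x y) z - m x (m y z) = m (m y x) z - m y (m x z)

/-- The deformed product `x ·_N y = N(x)·y + x·N(y) − N(x·y)`. -/
def nijDeform (mul : g →ₗ[K] g →ₗ[K] g) (N : g →ₗ[K] g) (x y : g) : g :=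
  mul (N x) y + mul x (N y) - N (mul x y)

/-- The Nijenhuis torsion `T(x,y) = N(x ·_N y) − N(x)·N(y)`. -/
def nijTorsion (mul : g →ₗ[K] g →ₗ[K] g) (N : g →ₗ[K] g) (x y : g) : g :=
  N (nijDeform mul N x y) - mul (N x) (N y)


theorem key_identity
    (mul : g →ₗ[K] g →ₗ[K] g) (hmul : IsPreLie mul) (N : g →ₗ[K] g) (x y z : g) :
    (nijDeform mul N (nijDeform mul N x y) z - nijDeform mul N x (nijDeform mul N y z)
      - (nijDeform mul N (nijDeform mul N y x) z - nijDeform mul N y (nijDeform mul N x z)))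
    + (mul x (nijTorsion mul N y z) - mul y (nijTorsion mul N x z)
          + mul (nijTorsion mul N y x) z - mul (nijTorsion mul N x y) z
          - nijTorsion mul N y (mul x z) + nijTorsion mul N x (mul y z)
          - nijTorsion mul N (mul x y - mul y x) z) = 0 := by
  have e1 : (mul (mul (x) (N y)) (N z) - mul (x) (mul (N y) (N z)) - (mul (mul (N y) (x)) (N z) - mul (N y) (mul (x) (N z)))) = 0 := sub_eq_zero_of_eq (hmul (x) (N y) (N z))
  have e2 : (mul (mul (y) (N x)) (N z) - mul (y) (mul (N x) (N z)) - (mul (mul (N x) (y)) (N z) - mul (N x) (mul (y) (N z)))) = 0 := sub_eq_zero_of_eq (hmul (y) (N x) (N z))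
  have e3 : (mul (mul (N x) (N y)) (z) - mul (N x) (mul (N y) (z)) - (mul (mul (N y) (N x)) (z) - mul (N y) (mul (N x) (z)))) = 0 := sub_eq_zero_of_eq (hmul (N x) (N y) (z))
  have e4 : (mul (mul (N x) (y)) (z) - mul (N x) (mul (y) (z)) - (mul (mul (y) (N x)) (z) - mul (y) (mul (N x) (z)))) = 0 := sub_eq_zero_of_eq (hmul (N x) (y) (z))
  have e5 : (mul (mul (N y) (x)) (z) - mul (N y) (mul (x) (z)) - (mul (mul (x) (N y)) (z) - mul (x) (mul (N y) (z)))) = 0 := sub_eq_zero_of_eq (hmul (N y) (x) (z))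
  have e6 : (mul (mul (x) (y)) (N z) - mul (x) (mul (y) (N z)) - (mul (mul (y) (x)) (N z) - mul (y) (mul (x) (N z)))) = 0 := sub_eq_zero_of_eq (hmul (x) (y) (N z))
  have e7 : (mul (mul (x) (y)) (z) - mul (x) (mul (y) (z)) - (mul (mul (y) (x)) (z) - mul (y) (mul (x) (z)))) = 0 := sub_eq_zero_of_eq (hmul (x) (y) (z))
  have expand : (nijDeform mul N (nijDeform mul N x y) z - nijDeform mul N x (nijDeform mul N y z)
      - (nijDeform mul N (nijDeform mul N y x) z - nijDeform mul N y (nijDeform mul N x z)))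
    + (mul x (nijTorsion mul N y z) - mul y (nijTorsion mul N x z)
          + mul (nijTorsion mul N y x) z - mul (nijTorsion mul N x y) z
          - nijTorsion mul N y (mul x z) + nijTorsion mul N x (mul y z)
          - nijTorsion mul N (mul x y - mul y x) z)
    = (mul (mul (x) (N y)) (N z) - mul (x) (mul (N y) (N z)) - (mul (mul (N y) (x)) (N z) - mul (N y) (mul (x) (N z)))) - (mul (mul (y) (N x)) (N z) - mul (y) (mul (N x) (N z)) - (mul (mul (N x) (y)) (N z) - mul (N x) (mul (y) (N z)))) + (mul (mul (N x) (N y)) (z) - mul (N x) (mul (N y) (z)) - (mul (mul (N y) (N x)) (z) - mul (N y) (mul (N x) (z))))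
        + N (-(mul (mul (N x) (y)) (z) - mul (N x) (mul (y) (z)) - (mul (mul (y) (N x)) (z) - mul (y) (mul (N x) (z)))) + (mul (mul (N y) (x)) (z) - mul (N y) (mul (x) (z)) - (mul (mul (x) (N y)) (z) - mul (x) (mul (N y) (z))))
        - (mul (mul (x) (y)) (N z) - mul (x) (mul (y) (N z)) - (mul (mul (y) (x)) (N z) - mul (y) (mul (x) (N z)))) + N (mul (mul (x) (y)) (z) - mul (x) (mul (y) (z)) - (mul (mul (y) (x)) (z) - mul (y) (mul (x) (z))))) := by
    simp only [nijDeform, nijTorsion, map_add, map_sub, map_neg,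
      LinearMap.add_apply, LinearMap.sub_apply, LinearMap.neg_apply]
    abel
  rw [expand, e1, e2, e3, e4, e5, e6, e7]
  simp

/-- The deformed product `·_N` is a pre-Lie structure iff the Nijenhuis torsion is closed
for the coboundary operator of the regular representation. -/
theorem deform_isPreLie_iff_torsion_closed
    (mul : g →ₗ[K] g →ₗ[K] g) (hmul : IsPreLie mul) (N : g →ₗ[K] g) :
    IsPreLieFn (nijDeform mul N) ↔
      ∀ x y z : g,
        mul x (nijTorsion mul N y z) - mul y (nijTorsion mul N x z)
          + mul (nijTorsion mul N y x) z - mul (nijTorsion mul N x y) z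
          - nijTorsion mul N y (mul x z) + nijTorsion mul N x (mul y z)
          - nijTorsion mul N (mul x y - mul y x) z = 0 := by
  constructor
  · intro h x y z
    have k := key_identity mul hmul N x y z
    rw [sub_eq_zero_of_eq (h x y z), zero_add] at k
    exact k
  · intro h x y z
    have k := key_identity mul hmul N x y z
    rw [h x y z, add_zero] at k
    exact sub_eq_zero.mp k
end

section
/- If N is a Nijenhuis operator on a pre-Lie algebra (g,·), then the deformed product x ·_N y = N(x)·y + x·N(y) − N(x·y) is a pre-Lie algebra structure on g, and N is a morphism of pre-Lie algebras from (g,·_N) to (g,·), i.e. N(x ·_N y) = N(x)·N(y) for all x,y ∈ g. -/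
variable {K : Type*} [Field K] [CharZero K]
variable {g : Type*} [AddCommGroup g] [Module K g]

/-- A Nijenhuis operator on a pre-Lie algebra. -/
def IsNijenhuis (mul : g →ₗ[K] g →ₗ[K] g) (N : g →ₗ[K] g) : Prop :=
  ∀ x y : g, mul (N x) (N y) = N (nijDeform mul N x y)

/-- If `N` is a Nijenhuis operator on a pre-Lie algebra, then `·_N` is a pre-Lie product and
`N` is a morphism from `(g,·_N)` to `(g,·)`. -/
theorem nijenhuis_deform_isPreLie_and_morphism
    (mul : g →ₗ[K] g →ₗ[K] g) (hmul : IsPreLie mul) (N : g →ₗ[K] g)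
    (hN : IsNijenhuis mul N) :
    IsPreLieFn (nijDeform mul N) ∧
      ∀ x y : g, N (nijDeform mul N x y) = mul (N x) (N y) := by
  have key : ∀ a b : g, N (nijDeform mul N a b) = mul (N a) (N b) :=
    fun a b => (hN a b).symm
  refine ⟨?_, key⟩
  intro x y z
  have outer : ∀ a b : g,
      nijDeform mul N a b = mul (N a) b + mul a (N b) - N (mul a b) := fun a b => rfl
  rw [outer (nijDeform mul N x y) z, outer x (nijDeform mul N y z),
    outer (nijDeform mul N y x) z, outer y (nijDeform mul N x z), key, key, key, key]
  have h1 := hmul x (N y) (N z)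
  have h2 := hmul (N x) y (N z)
  have h3 := hmul (N x) (N y) z
  have h4 := congrArg N (hmul x y (N z))
  have h5 := congrArg N (hmul x (N y) z)
  have h6 := congrArg N (hmul (N x) y z)
  have h7 := congrArg N (congrArg N (hmul x y z))
  simp only [map_sub] at h4 h5 h6 h7
  have hB1 := hN (mul x y) z
  have hB2 := hN x (mul y z)
  have hB3 := hN (mul y x) z
  have hB4 := hN y (mul x z)
  simp only [nijDeform, map_add, map_sub] at hB1 hB2 hB3 hB4
  simp only [nijDeform, map_add, map_sub, LinearMap.add_apply, LinearMap.sub_apply]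
  linear_combination (norm := module)
    h1 + h2 + h3 - h4 - h5 - h6 + h7 - hB1 + hB2 + hB3 - hB4
end

section
/- Let N be a Nijenhuis operator on a pre-Lie algebra (g,·). Then for every t ∈ K the product x ·_t y := x·y + t·(N(x)·y + x·N(y) − N(x·y)) is a pre-Lie algebra structure on g, and Id + tN is a morphism of pre-Lie algebras from (g,·_t) to (g,·), i.e. (Id+tN)(x ·_t y) = ((Id+tN)(x))·((Id+tN)(y)) for all x,y ∈ g. In particular, this deformation of (g,·) is trivial. -/
variable {K : Type*} [Field K] [CharZero K]
variable {g : Type*} [AddCommGroup g] [Module K g]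

/-- A Nijenhuis operator generates a trivial deformation: for every `t`, the product
`x ·_t y = x·y + t(N(x)·y + x·N(y) − N(x·y))` is pre-Lie and `Id + tN` is a morphism of
pre-Lie algebras from `(g,·_t)` to `(g,·)`. -/
theorem nijenhuis_trivial_deformation
    (mul : g →ₗ[K] g →ₗ[K] g) (hmul : IsPreLie mul) (N : g →ₗ[K] g)
    (hN : IsNijenhuis mul N) :
    ∀ t : K,
      IsPreLieFn (fun x y => mul x y + t • nijDeform mul N x y) ∧
      ∀ x y : g,
        (mul x y + t • nijDeform mul N x y) + t • N (mul x y + t • nijDeform mul N x y)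
          = mul (x + t • N x) (y + t • N y) := by
  intro t
  constructor
  · intro x y z
    have h0 := hmul x y z
    have h1 := hmul (N x) y z
    have h2 := hmul x (N y) z
    have h3 := hmul x y (N z)
    have h4 := hmul (N x) (N y) z
    have h5 := hmul (N x) y (N z)
    have h6 := hmul x (N y) (N z)
    have n0 := congrArg N h0
    simp only [map_sub] at n0
    have n1 := congrArg N h1
    simp only [map_sub] at n1
    have n2 := congrArg N h2
    simp only [map_sub] at n2
    have n3 := congrArg N h3
    simp only [map_sub] at n3
    have nn0 := congrArg N n0
    simp only [map_sub] at nn0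
    have mz := congrArg (fun v => mul v z) (hN x y)
    simp only [nijDeform, map_add, map_sub, LinearMap.add_apply, LinearMap.sub_apply] at mz
    have mz' := congrArg (fun v => mul v z) (hN y x)
    simp only [nijDeform, map_add, map_sub, LinearMap.add_apply, LinearMap.sub_apply] at mz'
    have mx := congrArg (fun v => mul x v) (hN y z)
    simp only [nijDeform, map_add, map_sub] at mx
    have my := congrArg (fun v => mul y v) (hN x z)
    simp only [nijDeform, map_add, map_sub] at my
    have q1 := hN (mul x y) z
    simp only [nijDeform, map_add, map_sub] at q1
    have q1' := hN (mul y x) z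
    simp only [nijDeform, map_add, map_sub] at q1'
    have q2 := hN x (mul y z)
    simp only [nijDeform, map_add, map_sub] at q2
    have q2' := hN y (mul x z)
    simp only [nijDeform, map_add, map_sub] at q2'
    simp only [nijDeform, map_add, map_sub, map_smul, LinearMap.add_apply,
      LinearMap.sub_apply, LinearMap.smul_apply]
    linear_combination (norm := module)
      h0 + t • (h1 + h2 + h3 - n0) +
      (t * t) • (h4 + h5 + h6 - mz + mz' + mx - my - q1 + q1' + q2 - q2'
        - n1 - n2 - n3 + nn0)
  · intro x y
    have q := hN x y
    simp only [nijDeform, map_add, map_sub] at q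
    simp only [nijDeform, map_add, map_sub, map_smul, LinearMap.add_apply,
      LinearMap.sub_apply, LinearMap.smul_apply]
    linear_combination (norm := module) (-(t * t)) • q
end

section
/- Let N be a Nijenhuis operator on a pre-Lie algebra (g,·). Then for all positive integers j,k and all x,y ∈ g: N^j(x)·N^k(y) − N^k(N^j(x)·y) − N^j(x·N^k(y)) + N^{j+k}(x·y) = 0. If moreover N is invertible, the same identity holds for all integers j,k ∈ ℤ (where N^i for negative i denotes the corresponding power of the inverse). -/
variable {K : Type*} [Field K] [CharZero K]
variable {g : Type*} [AddCommGroup g] [Module K g]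

/-!
Call `(P, Q)` a Nijenhuis pair when `P x · Q y = Q (P x · y) + P (x · Q y) - P Q (x · y)`. The
identity for `(j, k)` says that `(N^j, N^k)` is one, and `N` is Nijenhuis iff `(N, N)` is one.
If `(N, Q)` and `(P, Q)` are pairs, so is `(N P, Q)`; if `(P, N)` and `(P, Q)` are pairs and `P`
commutes with `N`, so is `(P, N Q)`. Pairs are also stable under inverting either operator (the
right one when it commutes with the left), so induction from `(N, N)` reaches every `(N^j, N^k)`.
-/

namespace Module.End

variable {R M : Type*} [CommRing R] [AddCommGroup M] [Module R M]

theorem units_apply_inv_apply (v : (Module.End R M)ˣ) (x : M) :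
    (v : Module.End R M) ((↑v⁻¹ : Module.End R M) x) = x := by
  rw [← mul_apply, Units.mul_inv, one_apply]

theorem units_inv_apply_apply (v : (Module.End R M)ˣ) (x : M) :
    (↑v⁻¹ : Module.End R M) ((v : Module.End R M) x) = x := by
  rw [← mul_apply, Units.inv_mul, one_apply]

def IsNijenhuisPair (mul : M →ₗ[R] M →ₗ[R] M) (P Q : Module.End R M) : Prop :=
  ∀ x y : M, mul (P x) (Q y) - Q (mul (P x) y) - P (mul x (Q y)) + (P * Q) (mul x y) = 0

namespace IsNijenhuisPair

variable {mul : M →ₗ[R] M →ₗ[R] M} {N P Q : Module.End R M}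

theorem one_left : IsNijenhuisPair mul 1 Q := by
  intro x y
  simp only [one_mul, one_apply]
  abel

theorem one_right : IsNijenhuisPair mul P 1 := by
  intro x y
  simp only [mul_one, one_apply]
  abel

theorem mul_left (hN : IsNijenhuisPair mul N Q) (hP : IsNijenhuisPair mul P Q) :
    IsNijenhuisPair mul (N * P) Q := by
  intro x y
  have h := congrArg N (hP x y)
  simp only [map_add, map_sub, map_zero, mul_apply] at h ⊢
  linear_combination (norm := module) hN (P x) y + h

theorem mul_right (hPN : Commute P N) (hN : IsNijenhuisPair mul P N)
    (hQ : IsNijenhuisPair mul P Q) : IsNijenhuisPair mul P (N * Q) := by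
  intro x y
  have h := congrArg N (hQ x y)
  have hc₁ := LinearMap.congr_fun hPN.eq (mul x (Q y))
  have hc₂ := LinearMap.congr_fun hPN.eq (Q (mul x y))
  simp only [map_add, map_sub, map_zero, mul_apply] at h hc₁ hc₂ ⊢
  linear_combination (norm := module) hN x (Q y) + h - hc₁ + hc₂

theorem pow_left (hN : IsNijenhuisPair mul N Q) (j : ℕ) : IsNijenhuisPair mul (N ^ j) Q := by
  induction j with
  | zero => exact one_left
  | succ j ih => rw [pow_succ']; exact hN.mul_left ih

theorem pow_right (hPN : Commute P N) (hN : IsNijenhuisPair mul P N) (k : ℕ) :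
    IsNijenhuisPair mul P (N ^ k) := by
  induction k with
  | zero => exact one_right
  | succ k ih => rw [pow_succ']; exact mul_right hPN hN ih

theorem units_inv_left {v : (Module.End R M)ˣ} (hv : IsNijenhuisPair mul v Q) :
    IsNijenhuisPair mul ↑v⁻¹ Q := by
  intro x y
  have h := congrArg (↑v⁻¹ : Module.End R M) (hv ((↑v⁻¹ : Module.End R M) x) y)
  simp only [map_add, map_sub, map_zero, mul_apply, units_apply_inv_apply,
    units_inv_apply_apply] at h ⊢
  linear_combination (norm := module) -h

theorem units_inv_right {v : (Module.End R M)ˣ} (hPv : Commute P v)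
    (hv : IsNijenhuisPair mul P v) : IsNijenhuisPair mul P ↑v⁻¹ := by
  intro x y
  have h := congrArg (↑v⁻¹ : Module.End R M) (hv x ((↑v⁻¹ : Module.End R M) y))
  have hc₁ := LinearMap.congr_fun hPv.units_inv_right.eq (mul x y)
  have hc₂ := LinearMap.congr_fun hPv.eq (mul x ((↑v⁻¹ : Module.End R M) y))
  simp only [map_add, map_sub, map_zero, mul_apply, units_apply_inv_apply,
    units_inv_apply_apply] at h hc₁ hc₂ ⊢
  rw [hc₂, units_inv_apply_apply] at h
  linear_combination (norm := module) -h + hc₁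

theorem zpow_left {u : (Module.End R M)ˣ} (hu : IsNijenhuisPair mul u Q) (j : ℤ) :
    IsNijenhuisPair mul ↑(u ^ j) Q := by
  cases j with
  | ofNat n =>
    simpa only [Int.ofNat_eq_natCast, zpow_natCast, Units.val_pow_eq_pow_val] using hu.pow_left n
  | negSucc n =>
    rw [zpow_negSucc]
    apply units_inv_left
    simpa only [Units.val_pow_eq_pow_val] using hu.pow_left (n + 1)

theorem zpow_right {u : (Module.End R M)ˣ} (hPu : Commute P u) (hu : IsNijenhuisPair mul P u)
    (k : ℤ) : IsNijenhuisPair mul P ↑(u ^ k) := by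
  cases k with
  | ofNat n =>
    simpa only [Int.ofNat_eq_natCast, zpow_natCast, Units.val_pow_eq_pow_val] using
      pow_right hPu hu n
  | negSucc n =>
    rw [zpow_negSucc]
    apply units_inv_right
    · simpa only [Units.val_pow_eq_pow_val] using hPu.pow_right (n + 1)
    · simpa only [Units.val_pow_eq_pow_val] using pow_right hPu hu (n + 1)

end IsNijenhuisPair

end Module.End

theorem isNijenhuis_iff_isNijenhuisPair {F V : Type*} [Field F] [AddCommGroup V] [Module F V]
    {mul : V →ₗ[F] V →ₗ[F] V} {N : Module.End F V} :
    IsNijenhuis mul N ↔ Module.End.IsNijenhuisPair mul N N := by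
  refine forall₂_congr fun x y => ?_
  rw [nijDeform, Module.End.mul_apply, ← sub_eq_zero]
  simp only [map_add, map_sub]
  constructor <;> intro h <;> linear_combination (norm := module) h

theorem nijenhuis_power_identity_general
    (mul : g →ₗ[K] g →ₗ[K] g) (N : Module.End K g)
    (hN : IsNijenhuis mul N) :
    (∀ j k : ℕ, 0 < j → 0 < k → ∀ x y : g,
      mul ((N ^ j) x) ((N ^ k) y) - (N ^ k) (mul ((N ^ j) x) y)
        - (N ^ j) (mul x ((N ^ k) y)) + (N ^ (j + k)) (mul x y) = 0) ∧
    (∀ u : (Module.End K g)ˣ, (u : Module.End K g) = N →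
      ∀ j k : ℤ, ∀ x y : g,
        mul (((u ^ j : (Module.End K g)ˣ) : Module.End K g) x)
            (((u ^ k : (Module.End K g)ˣ) : Module.End K g) y)
          - ((u ^ k : (Module.End K g)ˣ) : Module.End K g)
              (mul (((u ^ j : (Module.End K g)ˣ) : Module.End K g) x) y)
          - ((u ^ j : (Module.End K g)ˣ) : Module.End K g)
              (mul x (((u ^ k : (Module.End K g)ˣ) : Module.End K g) y))
          + ((u ^ (j + k) : (Module.End K g)ˣ) : Module.End K g) (mul x y) = 0) := by
  have hNN := isNijenhuis_iff_isNijenhuisPair.mp hN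
  refine ⟨fun j k _ _ x y => ?_, fun u hu j k x y => ?_⟩
  · rw [pow_add]
    exact ((hNN.pow_right (Commute.refl N) k).pow_left j) x y
  · subst hu
    rw [zpow_add, Units.val_mul]
    exact ((hNN.zpow_right (Commute.refl _) k).zpow_left j) x y

/-- For a Nijenhuis operator `N` on a pre-Lie algebra we have
`N^j(x)·N^k(y) − N^k(N^j(x)·y) − N^j(x·N^k(y)) + N^{j+k}(x·y) = 0` for all positive `j,k`;
if `N` is invertible the identity holds for all integers `j,k`. -/
theorem nijenhuis_power_identity
    (mul : g →ₗ[K] g →ₗ[K] g) (hmul : IsPreLie mul) (N : Module.End K g)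
    (hN : IsNijenhuis mul N) :
    (∀ j k : ℕ, 0 < j → 0 < k → ∀ x y : g,
      mul ((N ^ j) x) ((N ^ k) y) - (N ^ k) (mul ((N ^ j) x) y)
        - (N ^ j) (mul x ((N ^ k) y)) + (N ^ (j + k)) (mul x y) = 0) ∧
    (∀ u : (Module.End K g)ˣ, (u : Module.End K g) = N →
      ∀ j k : ℤ, ∀ x y : g,
        mul (((u ^ j : (Module.End K g)ˣ) : Module.End K g) x)
            (((u ^ k : (Module.End K g)ˣ) : Module.End K g) y)
          - ((u ^ k : (Module.End K g)ˣ) : Module.End K g)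
              (mul (((u ^ j : (Module.End K g)ˣ) : Module.End K g) x) y)
          - ((u ^ j : (Module.End K g)ˣ) : Module.End K g)
              (mul x (((u ^ k : (Module.End K g)ˣ) : Module.End K g) y))
          + ((u ^ (j + k) : (Module.End K g)ˣ) : Module.End K g) (mul x y) = 0) :=
  nijenhuis_power_identity_general mul N hN
end

section
/- Let N be a Nijenhuis operator on a pre-Lie algebra (g,·). Then for any polynomial P(z) = Σ_{i=0}^n c_i z^i with coefficients in K, the operator P(N) = Σ_{i=0}^n c_i N^i is also a Nijenhuis operator on (g,·). If moreover N is invertible, then Q(N) = Σ_{i=−m}^n c_i N^i is also a Nijenhuis operator for any Laurent polynomial Q(z) = Σ_{i=−m}^n c_i z^i. -/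
variable {K : Type*} [Field K] [CharZero K]
variable {g : Type*} [AddCommGroup g] [Module K g]

section Aux

set_option linter.unusedSectionVars false

/-- A linear combination of a family of endomorphisms satisfying the pairwise "Nijenhuis
interchange" identity is a Nijenhuis operator. -/
lemma nij_of_family {ι : Type*} (mul : g →ₗ[K] g →ₗ[K] g)
    (s : Finset ι) (c : ι → K) (e : ι → Module.End K g)
    (hkey : ∀ i ∈ s, ∀ j ∈ s, ∀ x y : g,
      mul (e i x) (e j y) = e j (mul (e i x) y) + e i (mul x (e j y)) - e i (e j (mul x y))) :
    IsNijenhuis mul (∑ i ∈ s, c i • e i) := by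
  intro x y
  have hP : ∀ z : g, (∑ i ∈ s, c i • e i) z = ∑ i ∈ s, c i • e i z := by
    intro z; simp
  simp only [nijDeform, hP, map_sum, map_smul, LinearMap.sum_apply, LinearMap.smul_apply,
    map_add, map_sub, Finset.smul_sum, smul_smul, smul_add, smul_sub]
  rw [Finset.sum_sub_distrib, Finset.sum_add_distrib]
  have step1 : ∑ a ∈ s, ∑ b ∈ s, (c a * c b) • mul (e b x) (e a y)
      = ∑ a ∈ s, ∑ b ∈ s, ((c a * c b) • e a (mul (e b x) y)
          + (c a * c b) • e b (mul x (e a y)) - (c a * c b) • e b (e a (mul x y))) := by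
    refine Finset.sum_congr rfl fun a ha => Finset.sum_congr rfl fun b hb => ?_
    rw [hkey b hb a ha, smul_sub, smul_add]
  rw [step1]
  simp only [Finset.sum_sub_distrib, Finset.sum_add_distrib]
  congr 1
  congr 1
  · rw [Finset.sum_comm]
    exact Finset.sum_congr rfl fun a _ => Finset.sum_congr rfl fun b _ => by rw [mul_comm (c b)]
  · rw [Finset.sum_comm]
    exact Finset.sum_congr rfl fun a _ => Finset.sum_congr rfl fun b _ => by rw [mul_comm (c b)]

lemma key_one (mul : g →ₗ[K] g →ₗ[K] g) (N : Module.End K g) (hN : IsNijenhuis mul N)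
    (j : ℕ) (x y : g) :
    mul (N x) ((N ^ j) y)
      = (N ^ j) (mul (N x) y) + N (mul x ((N ^ j) y)) - N ((N ^ j) (mul x y)) := by
  induction j generalizing y with
  | zero => simp
  | succ j ih =>
    have hs : ∀ z : g, (N ^ (j + 1)) z = N ((N ^ j) z) := by
      intro z; rw [pow_succ']; rfl
    have h1 := hN x ((N ^ j) y)
    simp only [nijDeform] at h1
    rw [hs, h1, ih y, hs, hs]
    simp only [map_add, map_sub]
    abel

lemma key_nat (mul : g →ₗ[K] g →ₗ[K] g) (N : Module.End K g) (hN : IsNijenhuis mul N)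
    (i j : ℕ) (x y : g) :
    mul ((N ^ i) x) ((N ^ j) y)
      = (N ^ j) (mul ((N ^ i) x) y) + (N ^ i) (mul x ((N ^ j) y))
        - (N ^ i) ((N ^ j) (mul x y)) := by
  induction i generalizing x with
  | zero => simp
  | succ i ih =>
    have hs : ∀ z : g, (N ^ (i + 1)) z = N ((N ^ i) z) := by
      intro z; rw [pow_succ']; rfl
    have h1 := key_one mul N hN j ((N ^ i) x) y
    rw [hs, h1, ih x]
    simp only [map_add, map_sub, hs]
    abel

lemma key_int (mul : g →ₗ[K] g →ₗ[K] g) (N : Module.End K g) (hN : IsNijenhuis mul N)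
    (u : (Module.End K g)ˣ) (hu : (u : Module.End K g) = N) (a b : ℤ) (x y : g) :
    mul (((u ^ a : (Module.End K g)ˣ) : Module.End K g) x)
        (((u ^ b : (Module.End K g)ˣ) : Module.End K g) y)
      = ((u ^ b : (Module.End K g)ˣ) : Module.End K g)
          (mul (((u ^ a : (Module.End K g)ˣ) : Module.End K g) x) y)
        + ((u ^ a : (Module.End K g)ˣ) : Module.End K g)
            (mul x (((u ^ b : (Module.End K g)ˣ) : Module.End K g) y))
        - ((u ^ a : (Module.End K g)ˣ) : Module.End K g)
            (((u ^ b : (Module.End K g)ˣ) : Module.End K g) (mul x y)) := by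
  set E : ℤ → Module.End K g := fun a => ((u ^ a : (Module.End K g)ˣ) : Module.End K g)
    with hEdef
  have hEadd : ∀ (a b : ℤ) (z : g), E (a + b) z = E a (E b z) := by
    intro a b z
    simp only [hEdef, zpow_add, Units.val_mul, Module.End.mul_apply]
  have hE0 : ∀ z : g, E 0 z = z := by intro z; simp [hEdef]
  have hcomm : ∀ (a b : ℤ) (z : g), E a (E b z) = E b (E a z) := by
    intro a b z; rw [← hEadd, add_comm, hEadd]
  have hcan : ∀ (a : ℤ) (z : g), E a (E (-a) z) = z := by
    intro a z; rw [← hEadd, add_neg_cancel, hE0]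
  have hcan2 : ∀ (a : ℤ) (z : g), E (-a) (E a z) = z := by
    intro a z; rw [← hEadd, neg_add_cancel, hE0]
  have hEnat : ∀ (i : ℕ) (z : g), E (i : ℤ) z = (N ^ i) z := by
    intro i z
    simp only [hEdef, zpow_natCast, Units.val_pow_eq_pow_val, hu]
  have hmix : ∀ (i : ℕ) (b : ℤ) (x y : g),
      mul (E (i : ℤ) x) (E b y)
        = E b (mul (E (i : ℤ) x) y) + E (i : ℤ) (mul x (E b y))
          - E (i : ℤ) (E b (mul x y)) := by
    intro i b x y
    obtain ⟨j, rfl | rfl⟩ := b.eq_nat_or_neg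
    · simp only [hEnat]; exact key_nat mul N hN i j x y
    · have H := key_nat mul N hN i j x (E (-(j : ℤ)) y)
      simp only [← hEnat] at H
      simp only [hcan] at H
      have H2 := congrArg (E (-(j : ℤ))) H
      simp only [map_add, map_sub] at H2
      rw [hcan2 (j : ℤ), hcomm (-(j : ℤ)) (i : ℤ) (mul x y),
        hcomm (-(j : ℤ)) (i : ℤ), hcan2 (j : ℤ)] at H2
      rw [H2]; abel
  obtain ⟨i, rfl | rfl⟩ := a.eq_nat_or_neg
  · exact hmix i b x y
  · have H := hmix i b (E (-(i : ℤ)) x) y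
    simp only [hcan] at H
    have H2 := congrArg (E (-(i : ℤ))) H
    simp only [map_add, map_sub] at H2
    simp only [hcan2] at H2
    rw [H2]; abel

end Aux

/-- Any polynomial `P(N) = Σ_{i=0}^n c_i N^i` of a Nijenhuis operator `N` on a pre-Lie algebra
is a Nijenhuis operator; if `N` is invertible, any Laurent polynomial
`Q(N) = Σ_{i=−m}^n c_i N^i` is a Nijenhuis operator. -/
theorem polynomial_of_nijenhuis_is_nijenhuis
    (mul : g →ₗ[K] g →ₗ[K] g) (hmul : IsPreLie mul) (N : Module.End K g)
    (hN : IsNijenhuis mul N) :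
    (∀ (n : ℕ) (c : ℕ → K),
      IsNijenhuis mul (∑ i ∈ Finset.range (n + 1), c i • N ^ i)) ∧
    (∀ u : (Module.End K g)ˣ, (u : Module.End K g) = N →
      ∀ (m n : ℕ) (c : ℤ → K),
        IsNijenhuis mul
          (∑ i ∈ Finset.Icc (-(m : ℤ)) (n : ℤ),
            c i • ((u ^ i : (Module.End K g)ˣ) : Module.End K g))) := by
  constructor
  · intro n c
    exact nij_of_family mul (Finset.range (n + 1)) c (fun i => N ^ i)
      (fun i _ j _ x y => key_nat mul N hN i j x y)
  · intro u hu m n c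
    exact nij_of_family mul (Finset.Icc (-(m : ℤ)) (n : ℤ)) c
      (fun a => ((u ^ a : (Module.End K g)ˣ) : Module.End K g))
      (fun a _ b _ x y => key_int mul N hN u hu a b x y)
end

section
/- Let (g,·) be a pre-Lie algebra and N : g → g a linear map. (i) If N² = 0, then N is a Nijenhuis operator on (g,·) if and only if N is a Rota-Baxter operator of weight 0 on (g,·). (ii) If N² = N, then N is a Nijenhuis operator if and only if N is a Rota-Baxter operator of weight −1. (iii) If N² = Id, then N is a Nijenhuis operator if and only if N + Id is a Rota-Baxter operator of weight −2, and also if and only if N − Id is a Rota-Baxter operator of weight 2. -/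
variable {K : Type*} [Field K] [CharZero K]
variable {g : Type*} [AddCommGroup g] [Module K g]

/-- A Rota-Baxter operator of weight `lam` on a pre-Lie algebra. -/
def IsRotaBaxter (mul : g →ₗ[K] g →ₗ[K] g) (lam : K) (R : g →ₗ[K] g) : Prop :=
  ∀ x y : g, mul (R x) (R y) = R (mul (R x) y + mul x (R y)) + lam • R (mul x y)

/-- Relations between Nijenhuis operators and Rota-Baxter operators:
(i) if `N² = 0`, Nijenhuis ↔ Rota-Baxter of weight 0;
(ii) if `N² = N`, Nijenhuis ↔ Rota-Baxter of weight −1;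
(iii) if `N² = Id`, Nijenhuis ↔ `N + Id` is Rota-Baxter of weight −2
  ↔ `N − Id` is Rota-Baxter of weight 2. -/
theorem nijenhuis_rotaBaxter_relations
    (mul : g →ₗ[K] g →ₗ[K] g) (hmul : IsPreLie mul) (N : g →ₗ[K] g) :
    (N ∘ₗ N = 0 → (IsNijenhuis mul N ↔ IsRotaBaxter mul 0 N)) ∧
    (N ∘ₗ N = N → (IsNijenhuis mul N ↔ IsRotaBaxter mul (-1) N)) ∧
    (N ∘ₗ N = LinearMap.id →
      ((IsNijenhuis mul N ↔ IsRotaBaxter mul (-2) (N + LinearMap.id)) ∧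
       (IsNijenhuis mul N ↔ IsRotaBaxter mul 2 (N - LinearMap.id)))) := by
  refine ⟨?_, ?_, ?_⟩
  · intro h
    have h2 : ∀ x, N (N x) = 0 := fun x => congrFun (congrArg DFunLike.coe h) x
    constructor <;> intro H x y <;> have h' := H x y <;>
      simp only [IsNijenhuis, IsRotaBaxter, nijDeform, map_add, map_sub, h2, zero_smul,
        add_zero, sub_zero] at h' ⊢ <;>
      linear_combination (norm := module) h'
  · intro h
    have h2 : ∀ x, N (N x) = N x := fun x => congrFun (congrArg DFunLike.coe h) x
    constructor <;> intro H x y <;> have h' := H x y <;>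
      simp only [IsNijenhuis, IsRotaBaxter, nijDeform, map_add, map_sub, h2, neg_smul,
        one_smul] at h' ⊢ <;>
      linear_combination (norm := module) h'
  · intro h
    have h2 : ∀ x, N (N x) = x := fun x => congrFun (congrArg DFunLike.coe h) x
    constructor <;> constructor <;> intro H x y <;> have h' := H x y <;>
      simp only [IsNijenhuis, IsRotaBaxter, nijDeform, LinearMap.add_apply, LinearMap.sub_apply,
        LinearMap.id_apply, map_add, map_sub, h2, neg_smul, one_smul, two_smul] at h' ⊢ <;>
      linear_combination (norm := module) h'
end

section
/- Let (g,·) be a pre-Lie algebra, (V;ρ,μ) a representation of (g,·), and T : V → g a linear map. Equip g ⊕ V with the semidirect product pre-Lie structure (x1,v1) ⋆ (x2,v2) = (x1·x2, ρ(x1)v2 + μ(x2)v1). Then the following are equivalent: (i) T is an O-operator on (g,·) associated to (V;ρ,μ); (ii) the linear map N_T : g ⊕ V → g ⊕ V given by N_T(x,v) = (T(v), 0) is a Nijenhuis operator on (g ⊕ V, ⋆); (iii) the linear map 𝒩_T : g ⊕ V → g ⊕ V given by 𝒩_T(x,v) = (T(v), v) is a Nijenhuis operator on (g ⊕ V, ⋆).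 -/
variable {K : Type*} [Field K] [CharZero K]
variable {g : Type*} [AddCommGroup g] [Module K g]
variable {V : Type*} [AddCommGroup V] [Module K V]

/-- A representation `(V; ρ, μ)` of a pre-Lie algebra `(g, mul)`. -/
def IsRep (mul : g →ₗ[K] g →ₗ[K] g) (ρ μ : g →ₗ[K] Module.End K V) : Prop :=
  (∀ (x y : g) (v : V), ρ (mul x y - mul y x) v = ρ x (ρ y v) - ρ y (ρ x v)) ∧
  (∀ (x y : g) (v : V), ρ x (μ y v) - μ y (ρ x v) = μ (mul x y) v - μ y (μ x v))

/-- An `O`-operator on a pre-Lie algebra associated to a representation. -/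
def IsOOp (mul : g →ₗ[K] g →ₗ[K] g) (ρ μ : g →ₗ[K] Module.End K V)
    (T : V →ₗ[K] g) : Prop :=
  ∀ u v : V, mul (T u) (T v) = T (ρ (T u) v + μ (T v) u)

/-- The semidirect product pre-Lie multiplication on `g × V`. -/
def sdMul (mul : g →ₗ[K] g →ₗ[K] g) (ρ μ : g →ₗ[K] Module.End K V)
    (p q : g × V) : g × V :=
  (mul p.1 q.1, ρ p.1 q.2 + μ q.1 p.2)

/-- The Nijenhuis condition for a plain multiplication and operator. -/
def IsNijenhuisFn {A : Type*} [AddCommGroup A] (m : A → A → A) (N : A → A) : Prop :=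
  ∀ p q : A, m (N p) (N q) = N (m (N p) q + m p (N q) - N (m p q))

/-- `T` is an `O`-operator iff `N_T (x,v) = (T v, 0)` is a Nijenhuis operator on the semidirect
product, iff `𝒩_T (x,v) = (T v, v)` is a Nijenhuis operator on the semidirect product. -/
theorem oOperator_iff_nijenhuis_on_semidirect
    (mul : g →ₗ[K] g →ₗ[K] g) (hmul : IsPreLie mul)
    (ρ μ : g →ₗ[K] Module.End K V) (hrep : IsRep mul ρ μ)
    (T : V →ₗ[K] g) :
    (IsOOp mul ρ μ T ↔
      IsNijenhuisFn (sdMul mul ρ μ) (fun p => ((T p.2, 0) : g × V))) ∧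
    (IsOOp mul ρ μ T ↔
      IsNijenhuisFn (sdMul mul ρ μ) (fun p => ((T p.2, p.2) : g × V))) := by
  constructor
  · constructor
    · intro hT p q
      simp only [sdMul, Prod.mk.injEq, Prod.fst_add, Prod.snd_add, Prod.fst_sub, Prod.snd_sub,
        Prod.mk_add_mk, Prod.mk_sub_mk, map_zero, LinearMap.zero_apply, add_zero, sub_zero,
        zero_sub]
      constructor
      · rw [hT p.2 q.2]
        congr 1
        abel
      · trivial
    · intro hN u v
      have := hN (0, u) (0, v)
      simp only [sdMul, Prod.mk.injEq, Prod.mk_add_mk, Prod.mk_sub_mk, map_zero,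
        LinearMap.zero_apply, add_zero, sub_zero, zero_add, zero_sub, sub_neg_eq_add] at this
      rw [this.1]
  · constructor
    · intro hT p q
      simp only [sdMul, Prod.mk.injEq, Prod.mk_add_mk, Prod.mk_sub_mk]
      constructor
      · rw [hT p.2 q.2]
        congr 1
        abel
      · abel
    · intro hN u v
      have := hN (0, u) (0, v)
      simp only [sdMul, Prod.mk.injEq, Prod.mk_add_mk, Prod.mk_sub_mk, map_zero,
        LinearMap.zero_apply, add_zero, zero_add] at this
      rw [this.1]
      congr 1
      abel
end

section
/- Let T1, T2 be two O-operators on a pre-Lie algebra (g,·) associated to a representation (V;ρ,μ). Then T1 and T2 are compatible (i.e. every linear combination k1·T1 + k2·T2 is an O-operator) if and only if T1(u)·T2(v) + T2(u)·T1(v) = T1(ρ(T2(u))v + μ(T2(v))u) + T2(ρ(T1(u))v + μ(T1(v))u) for all u,v ∈ V. -/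
variable {K : Type*} [Field K] [CharZero K]
variable {g : Type*} [AddCommGroup g] [Module K g]
variable {V : Type*} [AddCommGroup V] [Module K V]

/-- Two `O`-operators are compatible if every linear combination is an `O`-operator. -/
def OCompat (mul : g →ₗ[K] g →ₗ[K] g) (ρ μ : g →ₗ[K] Module.End K V)
    (T₁ T₂ : V →ₗ[K] g) : Prop :=
  ∀ k₁ k₂ : K, IsOOp mul ρ μ (k₁ • T₁ + k₂ • T₂)

/-- Two `O`-operators are compatible iff the mixed condition holds. -/
theorem compatible_oOperators_iff
    (mul : g →ₗ[K] g →ₗ[K] g) (hmul : IsPreLie mul)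
    (ρ μ : g →ₗ[K] Module.End K V) (hrep : IsRep mul ρ μ)
    (T₁ T₂ : V →ₗ[K] g) (h₁ : IsOOp mul ρ μ T₁) (h₂ : IsOOp mul ρ μ T₂) :
    OCompat mul ρ μ T₁ T₂ ↔
      ∀ u v : V,
        mul (T₁ u) (T₂ v) + mul (T₂ u) (T₁ v)
          = T₁ (ρ (T₂ u) v + μ (T₂ v) u) + T₂ (ρ (T₁ u) v + μ (T₁ v) u) := by
  constructor
  · intro h u v
    have H := h 1 1 u v
    simp only [LinearMap.add_apply, LinearMap.smul_apply, one_smul, map_add,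
      LinearMap.add_apply] at H
    have e1 := h₁ u v
    have e2 := h₂ u v
    simp only [map_add] at e1 e2
    simp only [map_add]
    linear_combination (norm := module) H - e1 - e2
  · intro hc k₁ k₂ u v
    have e1 := h₁ u v
    have e2 := h₂ u v
    have e3 := hc u v
    simp only [map_add] at e1 e2 e3
    simp only [LinearMap.add_apply, LinearMap.smul_apply, map_add, map_smul,
      smul_add, smul_smul]
    linear_combination (norm := module) (k₁*k₁) • e1 + (k₂*k₂) • e2 + (k₁*k₂) • e3
end

section
/- Let g be a finite-dimensional vector space over K with a nondegenerate symmetric bilinear form ⟨·,·⟩ and a ∈ g, and let ·^a be the pre-Lie product x ·^a y = ⟨x,y⟩a + ⟨x,a⟩y. Then: (i) every linear map N : g → g is a Nijenhuis operator on the sub-adjacent Lie algebra of (g,·^a), whose bracket is [x,y]^c = ⟨x,a⟩y − ⟨y,a⟩x; (ii) if N satisfies ⟨N(x),y⟩ = −⟨x,N(y)⟩ for all x,y ∈ g, then N is a Nijenhuis operator on the pre-Lie algebra (g,·^a) if and only if ⟨N(x),N(y)⟩a = −⟨x,y⟩N²(a) for all x,y ∈ g; (iii) if N satisfies ⟨N(x),y⟩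 = −⟨x,N(y)⟩ for all x,y, then the deformed product satisfies x (·^a)_N y = −x ·^{N(a)} y for all x,y ∈ g, so (g, (·^a)_N) is a pre-Lie algebra. -/
variable {K : Type*} [Field K] [CharZero K]
variable {g : Type*} [AddCommGroup g] [Module K g]

/-- The pre-Lie product `x ·^a y = ⟨x,y⟩a + ⟨x,a⟩y` on a vector space with a bilinear form. -/
def mulA (B : g →ₗ[K] g →ₗ[K] K) (a : g) (x y : g) : g :=
  B x y • a + B x a • y

/-- The sub-adjacent Lie bracket `[x,y]^c = ⟨x,a⟩y − ⟨y,a⟩x` of `(g, ·^a)`. -/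
def brA (B : g →ₗ[K] g →ₗ[K] K) (a : g) (x y : g) : g :=
  B x a • y - B y a • x

/-- For the pre-Lie algebra `(g, ·^a)` associated to a nondegenerate symmetric bilinear form:
(i) every linear map is a Nijenhuis operator on the sub-adjacent Lie algebra;
(ii) if `⟨N x, y⟩ = −⟨x, N y⟩`, then `N` is a Nijenhuis operator on `(g, ·^a)` iff
`⟨N x, N y⟩ a = −⟨x,y⟩ N²(a)`;
(iii) if `⟨N x, y⟩ = −⟨x, N y⟩`, then `x (·^a)_N y = −(x ·^{N a} y)`, so `(g, (·^a)_N)`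
is a pre-Lie algebra. -/
theorem burgers_preLie_nijenhuis [FiniteDimensional K g]
    (B : g →ₗ[K] g →ₗ[K] K)
    (hsym : ∀ x y : g, B x y = B y x)
    (hnd : ∀ x : g, (∀ y : g, B x y = 0) → x = 0)
    (a : g) :
    (∀ N : g →ₗ[K] g, ∀ x y : g,
      brA B a (N x) (N y)
        = N (brA B a (N x) y + brA B a x (N y) - N (brA B a x y))) ∧
    (∀ N : g →ₗ[K] g, (∀ x y : g, B (N x) y = -B x (N y)) →
      ((∀ x y : g,
          mulA B a (N x) (N y)
            = N (mulA B a (N x) y + mulA B a x (N y) - N (mulA B a x y))) ↔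
        ∀ x y : g, B (N x) (N y) • a = -(B x y • N (N a)))) ∧
    (∀ N : g →ₗ[K] g, (∀ x y : g, B (N x) y = -B x (N y)) →
      (∀ x y : g,
        mulA B a (N x) y + mulA B a x (N y) - N (mulA B a x y) = -(mulA B (N a) x y)) ∧
      IsPreLieFn (fun x y => mulA B a (N x) y + mulA B a x (N y) - N (mulA B a x y))) := by
  refine ⟨?_, ?_, ?_⟩
  · intro N x y
    simp only [brA, map_sub, map_add, map_smul]
    module
  · intro N hskew
    constructor
    · intro h x y
      have hx := h x y
      simp only [mulA, map_sub, map_add, map_smul, hskew] at hx ⊢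
      linear_combination (norm := module) hx
    · intro h x y
      have hx := h x y
      simp only [mulA, map_sub, map_add, map_smul, hskew] at hx ⊢
      linear_combination (norm := module) hx
  · intro N hskew
    have key : ∀ x y : g,
        mulA B a (N x) y + mulA B a x (N y) - N (mulA B a x y) = -(mulA B (N a) x y) := by
      intro x y
      simp only [mulA, map_sub, map_add, map_smul, hskew]
      module
    refine ⟨key, ?_⟩
    intro x y z
    simp only [key]
    simp only [mulA, map_neg, map_add, map_smul, LinearMap.neg_apply, LinearMap.add_apply,
      LinearMap.smul_apply, smul_eq_mul]
    linear_combination (norm := module)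
      (hsym x y) • (B (N a) z • (N a)) + (hsym x y) • (B (N a) (N a) • z)
end
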